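/- arXiv:1711.03868 — 2 statements merged into one kernel-verified Lean document; each statement's English description precedes it below -/
import Mathlib

section
/- Let G be a finite simple graph with n vertices, m edges, degree sequence d_1,…,d_n, and t_G triangles, and write det(x·I_n − L(G)) = Σ_j l_j(G) x^{n−j} for the characteristic polynomial of the Laplacian matrix L(G) = D(G) − A(G). Then l_0(G) = 1, l_1(G) = −2m, l_2(G) = 2m² − m − (1/2)Σ_{i=1}^n d_i², and l_3(G) = (1/3)·( −4m³ + 6m² + 3m·Σ_{i=1}^n d_i² − Σ_{i=1}^n d_i³ − 3Σ_{i=1}^n d_i² + 6t_G ). -/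
open Matrix Polynomial BigOperators

set_option linter.unusedSectionVars false

section AuxEsymm
open Finset

variable {V : Type*} [DecidableEq V] {R : Type*} [CommRing R]

lemma my_e1 (s : Finset V) (μ : V → R) :
    ∑ t ∈ s.powersetCard 1, ∏ v ∈ t, μ v = ∑ v ∈ s, μ v := by
  rw [Finset.powersetCard_one, Finset.sum_map]
  simp

lemma my_sum_insert_aux {x : V} {s : Finset V} (h : x ∉ s) (k : ℕ) (μ : V → R) :
    ∑ t ∈ (insert x s).powersetCard (k+1), ∏ v ∈ t, μ v
      = ∑ t ∈ s.powersetCard (k+1), ∏ v ∈ t, μ v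
        + μ x * ∑ t ∈ s.powersetCard k, ∏ v ∈ t, μ v := by
  rw [Finset.powersetCard_succ_insert h, Finset.sum_union, Finset.sum_image, Finset.mul_sum]
  · congr 1
    refine Finset.sum_congr rfl fun t ht => ?_
    rw [Finset.mem_powersetCard] at ht
    rw [Finset.prod_insert (fun hx => h (ht.1 hx))]
  · intro t ht u hu htu
    rw [Finset.mem_coe, Finset.mem_powersetCard] at ht hu
    have hxt : x ∉ t := fun hx => h (ht.1 hx)
    have hxu : x ∉ u := fun hx => h (hu.1 hx)
    have := congrArg (Finset.erase · x) htu
    simpa [Finset.erase_insert hxt, Finset.erase_insert hxu] using this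
  · rw [Finset.disjoint_right]
    intro t ht hts
    simp only [Finset.mem_image] at ht
    obtain ⟨u, hu, rfl⟩ := ht
    rw [Finset.mem_powersetCard] at hts hu
    exact h (hts.1 (Finset.mem_insert_self x u))

lemma my_e2 (s : Finset V) (μ : V → R) :
    2 * ∑ t ∈ s.powersetCard 2, ∏ v ∈ t, μ v
      = (∑ v ∈ s, μ v) ^ 2 - ∑ v ∈ s, μ v ^ 2 := by
  induction s using Finset.cons_induction with
  | empty =>
    rw [Finset.powersetCard_eq_empty.2 (by simp)]
    simp
  | cons x s hx ih =>
    rw [Finset.cons_eq_insert, my_sum_insert_aux hx 1 μ, my_e1,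
      Finset.sum_insert hx, Finset.sum_insert hx]
    linear_combination ih

lemma my_e3 (s : Finset V) (μ : V → R) :
    6 * ∑ t ∈ s.powersetCard 3, ∏ v ∈ t, μ v
      = (∑ v ∈ s, μ v) ^ 3 - 3 * (∑ v ∈ s, μ v) * (∑ v ∈ s, μ v ^ 2)
        + 2 * ∑ v ∈ s, μ v ^ 3 := by
  induction s using Finset.cons_induction with
  | empty =>
    rw [Finset.powersetCard_eq_empty.2 (by simp)]
    simp
  | cons x s hx ih =>
    have h2 := my_e2 s μ
    rw [Finset.cons_eq_insert, my_sum_insert_aux hx 2 μ,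
      Finset.sum_insert hx, Finset.sum_insert hx, Finset.sum_insert hx]
    linear_combination ih + 3 * μ x * h2

end AuxEsymm

section AuxSpec
open Finset

variable {n : Type*} [Fintype n] [DecidableEq n]

lemma my_isUnit_eigU {M : Matrix n n ℝ} (hM : M.IsHermitian) :
    IsUnit (hM.eigenvectorUnitary : Matrix n n ℝ) := by
  have h := (Unitary.toUnits hM.eigenvectorUnitary).isUnit
  simpa using h

lemma my_spectral_conj {M : Matrix n n ℝ} (hM : M.IsHermitian) :
    M = (hM.eigenvectorUnitary : Matrix n n ℝ) * Matrix.diagonal hM.eigenvalues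
        * ((hM.eigenvectorUnitary : Matrix n n ℝ))⁻¹ := by
  have h := hM.spectral_theorem
  have hstar : (star (hM.eigenvectorUnitary : Matrix n n ℝ))
      = ((hM.eigenvectorUnitary : Matrix n n ℝ))⁻¹ :=
    (Matrix.inv_eq_right_inv ((Matrix.mem_unitaryGroup_iff).mp hM.eigenvectorUnitary.2)).symm
  rw [Unitary.conjStarAlgAut_apply, hstar] at h
  have hd : Matrix.diagonal ((RCLike.ofReal : ℝ → ℝ) ∘ hM.eigenvalues)
      = Matrix.diagonal hM.eigenvalues := by
    congr 1
  rw [hd] at h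
  exact h

lemma my_conj_pow (U D : Matrix n n ℝ) (h1 : U⁻¹ * U = 1) (h2 : U * U⁻¹ = 1) (k : ℕ) :
    (U * D * U⁻¹) ^ k = U * D ^ k * U⁻¹ := by
  induction k with
  | zero => simp [h2]
  | succ k ih =>
    rw [pow_succ, pow_succ, ih]
    calc U * D ^ k * U⁻¹ * (U * D * U⁻¹)
        = U * D ^ k * (U⁻¹ * U) * D * U⁻¹ := by noncomm_ring
      _ = U * (D ^ k * D) * U⁻¹ := by rw [h1]; noncomm_ring

lemma my_trace_pow {M : Matrix n n ℝ} (hM : M.IsHermitian) (k : ℕ) :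
    Matrix.trace (M ^ k) = ∑ i, hM.eigenvalues i ^ k := by
  have hUu := my_isUnit_eigU hM
  have hdet := (Matrix.isUnit_iff_isUnit_det _).mp hUu
  have h1 := Matrix.nonsing_inv_mul _ hdet
  have h2 := Matrix.mul_nonsing_inv _ hdet
  conv_lhs => rw [my_spectral_conj hM]
  rw [my_conj_pow _ _ h1 h2, Matrix.trace_mul_cycle, h1,
    one_mul, Matrix.diagonal_pow, Matrix.trace_diagonal]
  simp


variable {R : Type*} [CommRing R]

lemma my_charpoly_conj (P M : Matrix n n R) (hP : IsUnit P) :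
    (P * M * P⁻¹).charpoly = M.charpoly := by
  have hinv : P * P⁻¹ = 1 := mul_nonsing_inv P (isUnit_iff_isUnit_det P |>.mp hP)
  have hmapinv : (C : R →+* R[X]).mapMatrix P * (C : R →+* R[X]).mapMatrix P⁻¹ = 1 := by
    rw [← RingHom.map_mul, hinv, RingHom.map_one]
  have key : charmatrix (P * M * P⁻¹) =
      (C : R →+* R[X]).mapMatrix P * charmatrix M * (C : R →+* R[X]).mapMatrix P⁻¹ := by
    simp only [charmatrix, mul_sub, sub_mul]
    congr 1
    · rw [mul_assoc, scalar_commute (X : R[X]) (Commute.all X) _, ← mul_assoc, hmapinv, one_mul]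
    · rw [← RingHom.map_mul, ← RingHom.map_mul]
  have hdet : ((C : R →+* R[X]).mapMatrix P).det * ((C : R →+* R[X]).mapMatrix P⁻¹).det = 1 := by
    rw [← det_mul, hmapinv, det_one]
  rw [Matrix.charpoly, key, det_mul, det_mul, mul_comm, ← mul_assoc, mul_comm (det _) (det _), hdet,
    one_mul]
  rfl

lemma my_charpoly_diagonal (d : n → R) :
    (Matrix.diagonal d).charpoly = ∏ i, (X - C (d i)) := by
  obtain ⟨e⟩ : Nonempty (n ≃ Fin (Fintype.card n)) := ⟨Fintype.equivFin n⟩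
  have h := Matrix.charpoly_reindex e (Matrix.diagonal d)
  rw [Matrix.reindex_apply, Matrix.submatrix_diagonal _ _ e.symm.injective] at h
  rw [← h, Matrix.charpoly_of_upperTriangular _ ?_]
  · rw [← Equiv.prod_comp e.symm fun i => (X - C (d i))]
    simp
  · intro i j hij
    exact Matrix.diagonal_apply_ne _ hij.ne'

lemma my_charpoly_hermitian {M : Matrix n n ℝ} (hM : M.IsHermitian) :
    M.charpoly = ∏ i, (X - C (hM.eigenvalues i)) := by
  conv_lhs => rw [my_spectral_conj hM]
  rw [my_charpoly_conj _ _ (my_isUnit_eigU hM), my_charpoly_diagonal]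

variable {n : Type*} [Fintype n] [DecidableEq n]

lemma my_coeff_prod (μ : n → ℝ) {j : ℕ} (hj : j ≤ Fintype.card n) :
    (∏ i, (X - C (μ i))).coeff (Fintype.card n - j)
      = (-1 : ℝ) ^ j * ∑ t ∈ (Finset.univ : Finset n).powersetCard j, ∏ v ∈ t, μ v := by
  have hcard : Multiset.card ((Finset.univ : Finset n).val.map μ) = Fintype.card n := by
    rw [Multiset.card_map]; rfl
  have h1 : (∏ i, (X - C (μ i)))
      = (((Finset.univ : Finset n).val.map μ).map (fun t => X - C t)).prod := by
    rw [Multiset.map_map, Finset.prod_eq_multiset_prod]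
    rfl
  rw [h1, Multiset.prod_X_sub_C_coeff _ (by rw [hcard]; omega), hcard,
    Nat.sub_sub_self hj, Finset.esymm_map_val]

end AuxSpec

section AuxGraph
open Finset

variable {V : Type*} [Fintype V] [DecidableEq V] (G : SimpleGraph V) [DecidableRel G.Adj]

lemma my_fiber_card {a b c : V} (hab : G.Adj a b) (hac : G.Adj a c) (hbc : G.Adj b c) :
    ((Finset.univ : Finset (V × V × V)).filter
      (fun p => (G.Adj p.1 p.2.1 ∧ G.Adj p.2.1 p.2.2 ∧ G.Adj p.2.2 p.1) ∧
        ({p.1, p.2.1, p.2.2} : Finset V) = {a, b, c})).card = 6 := by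
  have h1 : a ≠ b := hab.ne
  have h2 : a ≠ c := hac.ne
  have h3 : b ≠ c := hbc.ne
  have heq : (Finset.univ : Finset (V × V × V)).filter
      (fun p => (G.Adj p.1 p.2.1 ∧ G.Adj p.2.1 p.2.2 ∧ G.Adj p.2.2 p.1) ∧
        ({p.1, p.2.1, p.2.2} : Finset V) = {a, b, c})
      = {(a,b,c),(a,c,b),(b,a,c),(b,c,a),(c,a,b),(c,b,a)} := by
    ext ⟨x, y, z⟩
    simp only [Finset.mem_filter, Finset.mem_univ, true_and, Finset.mem_insert,
      Finset.mem_singleton, Prod.mk.injEq]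
    constructor
    · rintro ⟨⟨hxy, hyz, hzx⟩, hset⟩
      have hx : x = a ∨ x = b ∨ x = c := by
        have : x ∈ ({a,b,c} : Finset V) := by rw [← hset]; simp
        simpa using this
      have hy : y = a ∨ y = b ∨ y = c := by
        have : y ∈ ({a,b,c} : Finset V) := by rw [← hset]; simp
        simpa using this
      have hz : z = a ∨ z = b ∨ z = c := by
        have : z ∈ ({a,b,c} : Finset V) := by rw [← hset]; simp
        simpa using this
      have hxy' : x ≠ y := hxy.ne
      have hyz' : y ≠ z := hyz.ne
      have hzx' : z ≠ x := hzx.ne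
      rcases hx with rfl|rfl|rfl <;> rcases hy with rfl|rfl|rfl <;>
        rcases hz with rfl|rfl|rfl <;> simp_all
    · rintro (⟨rfl,rfl,rfl⟩|⟨rfl,rfl,rfl⟩|⟨rfl,rfl,rfl⟩|⟨rfl,rfl,rfl⟩|⟨rfl,rfl,rfl⟩|⟨rfl,rfl,rfl⟩) <;>
        refine ⟨⟨?_, ?_, ?_⟩, ?_⟩ <;>
        first
          | exact hab | exact hab.symm | exact hac | exact hac.symm
          | exact hbc | exact hbc.symm
          | (ext w; simp; try tauto)
  rw [heq]
  rw [Finset.card_insert_of_notMem (by simp [Prod.ext_iff]; tauto),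
    Finset.card_insert_of_notMem (by simp [Prod.ext_iff]; tauto),
    Finset.card_insert_of_notMem (by simp [Prod.ext_iff]; tauto),
    Finset.card_insert_of_notMem (by simp [Prod.ext_iff]; tauto),
    Finset.card_insert_of_notMem (by simp [Prod.ext_iff]; tauto),
    Finset.card_singleton]

lemma my_card_T {V : Type*} [Fintype V] [DecidableEq V] (G : SimpleGraph V) [DecidableRel G.Adj] :
    ((Finset.univ : Finset (V × V × V)).filter
      (fun p => G.Adj p.1 p.2.1 ∧ G.Adj p.2.1 p.2.2 ∧ G.Adj p.2.2 p.1)).card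
      = 6 * (G.cliqueFinset 3).card := by
  rw [Finset.card_eq_sum_card_fiberwise
    (f := fun p : V × V × V => ({p.1, p.2.1, p.2.2} : Finset V)) (t := G.cliqueFinset 3) ?_]
  · rw [Finset.sum_congr rfl (g := fun _ => 6) ?_, Finset.sum_const, smul_eq_mul, mul_comm]
    intro s hs
    rw [SimpleGraph.mem_cliqueFinset_iff, SimpleGraph.is3Clique_iff] at hs
    obtain ⟨a, b, c, hab, hac, hbc, rfl⟩ := hs
    rw [Finset.filter_filter]
    exact my_fiber_card G hab hac hbc
  · intro p hp
    rw [Finset.mem_coe, Finset.mem_filter] at hp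
    simp only [Finset.mem_coe, SimpleGraph.mem_cliqueFinset_iff]
    rw [SimpleGraph.is3Clique_triple_iff]
    exact ⟨hp.2.1, hp.2.2.2.symm, hp.2.2.1⟩

lemma my_trace_A3 {V : Type*} [Fintype V] [DecidableEq V] (G : SimpleGraph V) [DecidableRel G.Adj] :
    Matrix.trace (G.adjMatrix ℝ * G.adjMatrix ℝ * G.adjMatrix ℝ)
      = 6 * ((G.cliqueFinset 3).card : ℝ) := by
  have key : ∀ v w u : V, G.adjMatrix ℝ v w * G.adjMatrix ℝ w u * G.adjMatrix ℝ u v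
      = if G.Adj v w ∧ G.Adj w u ∧ G.Adj u v then (1 : ℝ) else 0 := by
    intro v w u
    by_cases h1 : G.Adj v w <;> by_cases h2 : G.Adj w u <;> by_cases h3 : G.Adj u v <;>
      simp [h1, h2, h3]
  have h1 : Matrix.trace (G.adjMatrix ℝ * G.adjMatrix ℝ * G.adjMatrix ℝ)
      = ∑ v, ∑ w, ∑ u, G.adjMatrix ℝ v w * G.adjMatrix ℝ w u * G.adjMatrix ℝ u v := by
    simp only [Matrix.trace, Matrix.diag, Matrix.mul_apply, Finset.sum_mul]
    rw [Finset.sum_congr rfl fun v _ => Finset.sum_comm]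
  have h2 : Matrix.trace (G.adjMatrix ℝ * G.adjMatrix ℝ * G.adjMatrix ℝ)
      = ∑ p : V × V × V, (if G.Adj p.1 p.2.1 ∧ G.Adj p.2.1 p.2.2 ∧ G.Adj p.2.2 p.1
          then (1 : ℝ) else 0) := by
    rw [h1]
    simp only [Fintype.sum_prod_type, key]
  rw [h2, Finset.sum_boole, my_card_T]
  push_cast
  ring

lemma my_trace_L {V : Type*} [Fintype V] [DecidableEq V] (G : SimpleGraph V) [DecidableRel G.Adj] :
    Matrix.trace (Matrix.diagonal (fun v => (G.degree v : ℝ)) - G.adjMatrix ℝ)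
      = 2 * (G.edgeFinset.card : ℝ) := by
  rw [Matrix.trace_sub, Matrix.trace_diagonal, SimpleGraph.trace_adjMatrix, sub_zero]
  rw [← Nat.cast_sum _ _, SimpleGraph.sum_degrees_eq_twice_card_edges]
  push_cast
  ring

variable {V : Type*} [Fintype V] [DecidableEq V] (G : SimpleGraph V) [DecidableRel G.Adj]

lemma my_trace_diag_mul (d : V → ℝ) :
    Matrix.trace (Matrix.diagonal d * G.adjMatrix ℝ) = 0 := by
  refine Finset.sum_eq_zero fun v _ => ?_
  rw [Matrix.diag_apply, Matrix.mul_apply]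
  refine Finset.sum_eq_zero fun u _ => ?_
  rcases eq_or_ne v u with rfl | h
  · simp
  · simp [Matrix.diagonal_apply_ne _ h]

lemma my_trace_mul_diag (d : V → ℝ) :
    Matrix.trace (G.adjMatrix ℝ * Matrix.diagonal d) = 0 := by
  refine Finset.sum_eq_zero fun v _ => ?_
  rw [Matrix.diag_apply, Matrix.mul_apply]
  refine Finset.sum_eq_zero fun u _ => ?_
  rcases eq_or_ne u v with rfl | h
  · simp
  · simp [Matrix.diagonal_apply_ne _ h]

lemma my_trace_A2 :
    Matrix.trace (G.adjMatrix ℝ * G.adjMatrix ℝ) = ∑ v, (G.degree v : ℝ) := by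
  simp only [Matrix.trace, Matrix.diag]
  refine Finset.sum_congr rfl fun v _ => ?_
  exact G.adjMatrix_mul_self_apply_self v

lemma my_trace_diag_A2 (d : V → ℝ) :
    Matrix.trace (Matrix.diagonal d * (G.adjMatrix ℝ * G.adjMatrix ℝ))
      = ∑ v, d v * (G.degree v : ℝ) := by
  simp only [Matrix.trace, Matrix.diag, Matrix.diagonal_mul]
  refine Finset.sum_congr rfl fun v _ => ?_
  rw [G.adjMatrix_mul_self_apply_self v]

lemma my_trace_L2 :
    Matrix.trace ((Matrix.diagonal (fun v => (G.degree v : ℝ)) - G.adjMatrix ℝ) ^ 2)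
      = ∑ v, (G.degree v : ℝ) ^ 2 + 2 * (G.edgeFinset.card : ℝ) := by
  have hexp : (Matrix.diagonal (fun v => (G.degree v : ℝ)) - G.adjMatrix ℝ) ^ 2
      = Matrix.diagonal (fun v => (G.degree v : ℝ)) * Matrix.diagonal (fun v => (G.degree v : ℝ))
        - Matrix.diagonal (fun v => (G.degree v : ℝ)) * G.adjMatrix ℝ
        - G.adjMatrix ℝ * Matrix.diagonal (fun v => (G.degree v : ℝ))
        + G.adjMatrix ℝ * G.adjMatrix ℝ := by noncomm_ring
  rw [hexp, Matrix.trace_add, Matrix.trace_sub, Matrix.trace_sub,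
    my_trace_diag_mul, my_trace_mul_diag, my_trace_A2,
    Matrix.diagonal_mul_diagonal, Matrix.trace_diagonal]
  rw [← Nat.cast_sum _ _, SimpleGraph.sum_degrees_eq_twice_card_edges]
  push_cast
  ring_nf

lemma my_trace_L3 :
    Matrix.trace ((Matrix.diagonal (fun v => (G.degree v : ℝ)) - G.adjMatrix ℝ) ^ 3)
      = ∑ v, (G.degree v : ℝ) ^ 3 + 3 * ∑ v, (G.degree v : ℝ) ^ 2
        - Matrix.trace (G.adjMatrix ℝ * G.adjMatrix ℝ * G.adjMatrix ℝ) := by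
  have hexp : (Matrix.diagonal (fun v => (G.degree v : ℝ)) - G.adjMatrix ℝ) ^ 3
      = Matrix.diagonal (fun v => (G.degree v : ℝ)) * Matrix.diagonal (fun v => (G.degree v : ℝ))
          * Matrix.diagonal (fun v => (G.degree v : ℝ))
        - Matrix.diagonal (fun v => (G.degree v : ℝ)) * Matrix.diagonal (fun v => (G.degree v : ℝ))
          * G.adjMatrix ℝ
        - Matrix.diagonal (fun v => (G.degree v : ℝ)) * G.adjMatrix ℝ
          * Matrix.diagonal (fun v => (G.degree v : ℝ))
        - G.adjMatrix ℝ * (Matrix.diagonal (fun v => (G.degree v : ℝ))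
          * Matrix.diagonal (fun v => (G.degree v : ℝ)))
        + Matrix.diagonal (fun v => (G.degree v : ℝ)) * (G.adjMatrix ℝ * G.adjMatrix ℝ)
        + G.adjMatrix ℝ * Matrix.diagonal (fun v => (G.degree v : ℝ)) * G.adjMatrix ℝ
        + G.adjMatrix ℝ * G.adjMatrix ℝ * Matrix.diagonal (fun v => (G.degree v : ℝ))
        - G.adjMatrix ℝ * G.adjMatrix ℝ * G.adjMatrix ℝ := by noncomm_ring
  have t1 : Matrix.trace (Matrix.diagonal (fun v => (G.degree v : ℝ))
      * Matrix.diagonal (fun v => (G.degree v : ℝ)) * Matrix.diagonal (fun v => (G.degree v : ℝ)))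
      = ∑ v, (G.degree v : ℝ) ^ 3 := by
    rw [Matrix.diagonal_mul_diagonal, Matrix.diagonal_mul_diagonal, Matrix.trace_diagonal]
    exact Finset.sum_congr rfl fun v _ => by ring
  have t2 : Matrix.trace (Matrix.diagonal (fun v => (G.degree v : ℝ))
      * Matrix.diagonal (fun v => (G.degree v : ℝ)) * G.adjMatrix ℝ) = 0 := by
    rw [Matrix.diagonal_mul_diagonal, my_trace_diag_mul]
  have t3 : Matrix.trace (Matrix.diagonal (fun v => (G.degree v : ℝ)) * G.adjMatrix ℝ
      * Matrix.diagonal (fun v => (G.degree v : ℝ))) = 0 := by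
    rw [Matrix.trace_mul_cycle, Matrix.diagonal_mul_diagonal, my_trace_diag_mul]
  have t4 : Matrix.trace (G.adjMatrix ℝ * (Matrix.diagonal (fun v => (G.degree v : ℝ))
      * Matrix.diagonal (fun v => (G.degree v : ℝ)))) = 0 := by
    rw [Matrix.diagonal_mul_diagonal, my_trace_mul_diag]
  have t5 : Matrix.trace (Matrix.diagonal (fun v => (G.degree v : ℝ))
      * (G.adjMatrix ℝ * G.adjMatrix ℝ)) = ∑ v, (G.degree v : ℝ) ^ 2 := by
    rw [my_trace_diag_A2]
    exact Finset.sum_congr rfl fun v _ => (sq ((G.degree v : ℝ))).symm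
  have t7 : Matrix.trace (G.adjMatrix ℝ * G.adjMatrix ℝ
      * Matrix.diagonal (fun v => (G.degree v : ℝ))) = ∑ v, (G.degree v : ℝ) ^ 2 := by
    rw [Matrix.trace_mul_comm]
    exact t5
  have t6 : Matrix.trace (G.adjMatrix ℝ * Matrix.diagonal (fun v => (G.degree v : ℝ))
      * G.adjMatrix ℝ) = ∑ v, (G.degree v : ℝ) ^ 2 := by
    rw [Matrix.trace_mul_cycle]
    exact t7
  rw [hexp]
  simp only [Matrix.trace_add, Matrix.trace_sub]
  rw [t1, t2, t3, t4, t5, t6, t7]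
  ring

end AuxGraph

/-- For a finite simple graph `G` with `n ≥ 3` vertices, `m` edges, degree
sequence `(d_v)` and `t_G` triangles, the coefficients `l_j` of `x^(n-j)` in the
characteristic polynomial of the Laplacian matrix `L(G) = D(G) − A(G)` satisfy
`l_0 = 1`, `l_1 = −2m`, `l_2 = 2m² − m − (1/2)Σ d²` and
`l_3 = (1/3)(−4m³ + 6m² + 3m·Σ d² − Σ d³ − 3Σ d² + 6 t_G)`. -/

theorem laplacian_charpoly_first_four_coeffs {V : Type*} [Fintype V] [DecidableEq V]
    (G : SimpleGraph V) [DecidableRel G.Adj]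
    (hn : 3 ≤ Fintype.card V) :
    (Matrix.charpoly
        (Matrix.diagonal (fun v => (G.degree v : ℝ)) - G.adjMatrix ℝ)).coeff
        (Fintype.card V - 0) = 1 ∧
    (Matrix.charpoly
        (Matrix.diagonal (fun v => (G.degree v : ℝ)) - G.adjMatrix ℝ)).coeff
        (Fintype.card V - 1) = -2 * (G.edgeFinset.card : ℝ) ∧
    (Matrix.charpoly
        (Matrix.diagonal (fun v => (G.degree v : ℝ)) - G.adjMatrix ℝ)).coeff
        (Fintype.card V - 2)
      = 2 * (G.edgeFinset.card : ℝ) ^ 2 - (G.edgeFinset.card : ℝ)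
          - (1 / 2) * ∑ v, (G.degree v : ℝ) ^ 2 ∧
    (Matrix.charpoly
        (Matrix.diagonal (fun v => (G.degree v : ℝ)) - G.adjMatrix ℝ)).coeff
        (Fintype.card V - 3)
      = (1 / 3) * (-4 * (G.edgeFinset.card : ℝ) ^ 3 + 6 * (G.edgeFinset.card : ℝ) ^ 2
          + 3 * (G.edgeFinset.card : ℝ) * ∑ v, (G.degree v : ℝ) ^ 2
          - ∑ v, (G.degree v : ℝ) ^ 3
          - 3 * ∑ v, (G.degree v : ℝ) ^ 2
          + 6 * ((G.cliqueFinset 3).card : ℝ)) := by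
  have hL : (Matrix.diagonal (fun v => (G.degree v : ℝ)) - G.adjMatrix ℝ).IsHermitian := by
    show _ᴴ = _
    rw [Matrix.conjTranspose_eq_transpose_of_trivial, Matrix.transpose_sub,
      Matrix.diagonal_transpose, SimpleGraph.transpose_adjMatrix]
  have hchar := my_charpoly_hermitian hL
  have hp1 : ∑ i, hL.eigenvalues i = 2 * (G.edgeFinset.card : ℝ) := by
    have h := my_trace_pow hL 1
    simp only [pow_one] at h
    rw [← h, my_trace_L]
  have hp2 : ∑ i, hL.eigenvalues i ^ 2
      = ∑ v, (G.degree v : ℝ) ^ 2 + 2 * (G.edgeFinset.card : ℝ) := by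
    rw [← my_trace_pow hL 2, my_trace_L2]
  have hp3 : ∑ i, hL.eigenvalues i ^ 3
      = ∑ v, (G.degree v : ℝ) ^ 3 + 3 * ∑ v, (G.degree v : ℝ) ^ 2
        - 6 * ((G.cliqueFinset 3).card : ℝ) := by
    rw [← my_trace_pow hL 3, my_trace_L3, my_trace_A3]
  refine ⟨?_, ?_, ?_, ?_⟩
  · rw [hchar, my_coeff_prod _ (by omega : 0 ≤ Fintype.card V)]
    simp [Finset.powersetCard_zero]
  · rw [hchar, my_coeff_prod _ (by omega : 1 ≤ Fintype.card V), my_e1, hp1]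
    ring
  · rw [hchar, my_coeff_prod _ (by omega : 2 ≤ Fintype.card V)]
    have he2 := my_e2 (Finset.univ : Finset V) hL.eigenvalues
    rw [hp1, hp2] at he2
    linear_combination he2 / 2
  · rw [hchar, my_coeff_prod _ (by omega : 3 ≤ Fintype.card V)]
    have he3 := my_e3 (Finset.univ : Finset V) hL.eigenvalues
    rw [hp1, hp2, hp3] at he3
    linear_combination (-1/6 : ℝ) * he3
end

section
/- Let G be a finite simple graph with n vertices, m edges, degree sequence d_1,…,d_n, and t_G triangles, and write det(x·I_n − Q(G)) = Σ_j q_j(G) x^{n−j} for the characteristic polynomial of the signless Laplacian matrix Q(G) = D(G) + A(G). Then q_0(G) = 1, q_1(G) = −2m, q_2(G) = 2m² − m − (1/2)Σ_r d_r², and q_3(G) = −(1/3)·( 6t_G − 6m² + 4m³ + 3(1−m)Σ_r d_r² + Σ_r d_r³ ). -/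
open Matrix Polynomial BigOperators

section Aux

open Finset

private lemma coeff_prod_X_sub_C_aux (m : Multiset ℝ) :
    ((m.map fun t => X - C t).prod.coeff (Multiset.card m) = 1) ∧
    (1 ≤ Multiset.card m → (m.map fun t => X - C t).prod.coeff (Multiset.card m - 1)
       = -(m.sum)) ∧
    (2 ≤ Multiset.card m → (m.map fun t => X - C t).prod.coeff (Multiset.card m - 2)
       = (m.sum ^ 2 - (m.map (· ^ 2)).sum) / 2) ∧
    (3 ≤ Multiset.card m → (m.map fun t => X - C t).prod.coeff (Multiset.card m - 3)
       = -(m.sum ^ 3 - 3 * m.sum * (m.map (· ^ 2)).sum + 2 * (m.map (· ^ 3)).sum) / 6) := by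
  induction m using Multiset.induction with
  | empty => simp
  | cons a s ih =>
    obtain ⟨h0, h1, h2, h3⟩ := ih
    have hdeg : ((s.map fun t => X - C t).prod).natDegree = Multiset.card s := by
      simpa using natDegree_multiset_prod_X_sub_C_eq_card s
    have hprod : (((a ::ₘ s).map fun t => X - C t).prod)
        = ((s.map fun t => X - C t).prod) * (X - C a) := by
      rw [Multiset.map_cons, Multiset.prod_cons, mul_comm]
    have hcard : Multiset.card (a ::ₘ s) = Multiset.card s + 1 := by simp
    set P := (s.map fun t => X - C t).prod with hP
    have htop : P.coeff (Multiset.card s + 1) = 0 :=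
      coeff_eq_zero_of_natDegree_lt (by omega)
    refine ⟨?_, fun _ => ?_, fun hc2 => ?_, fun hc3 => ?_⟩
    · rw [hprod, hcard, coeff_mul_X_sub_C, h0, htop]; ring
    · rw [hprod, hcard]
      simp only [Nat.add_sub_cancel]
      rcases Nat.eq_zero_or_pos (Multiset.card s) with h | h
      · obtain hs : s = 0 := Multiset.card_eq_zero.mp h
        subst hs; simp [hP]
      · have : Multiset.card s = (Multiset.card s - 1) + 1 := by omega
        rw [this, coeff_mul_X_sub_C, h1 h, ← this, h0]
        simp; ring
    · rw [hprod, hcard]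
      have : Multiset.card s + 1 - 2 = Multiset.card s - 1 := by omega
      rw [this]
      rcases Nat.lt_or_ge (Multiset.card s) 2 with h | h
      · have hc1 : Multiset.card s = 1 := by omega
        obtain ⟨b, rfl⟩ := Multiset.card_eq_one.mp hc1
        rw [show Multiset.card {b} - 1 = 0 from rfl, mul_coeff_zero]
        simp [hP]
        ring
      · have e : Multiset.card s - 1 = (Multiset.card s - 2) + 1 := by omega
        rw [e, coeff_mul_X_sub_C, h2 h, ← e, h1 (by omega)]
        simp; ring
    · rw [hprod, hcard]
      have : Multiset.card s + 1 - 3 = Multiset.card s - 2 := by omega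
      rw [this]
      rcases Nat.lt_or_ge (Multiset.card s) 3 with h | h
      · have hc2' : Multiset.card s = 2 := by omega
        obtain ⟨b, c, rfl⟩ := Multiset.card_eq_two.mp hc2'
        rw [show Multiset.card {b, c} - 2 = 0 from rfl, mul_coeff_zero]
        simp [hP, mul_coeff_zero]
        ring
      · have e : Multiset.card s - 2 = (Multiset.card s - 3) + 1 := by omega
        rw [e, coeff_mul_X_sub_C, h3 h, ← e, h2 (by omega)]
        simp; ring

variable {n : Type*} [Fintype n] [DecidableEq n]

private lemma charpoly_conj_aux (U M : Matrix n n ℝ) (h1 : U * star U = 1) :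
    (U * M * star U).charpoly = M.charpoly := by
  have hm : charmatrix (U * M * star U)
      = U.map C * charmatrix M * (star U).map C := by
    unfold charmatrix
    have hUV : U.map (C : ℝ →+* ℝ[X]) * (star U).map C = 1 := by
      rw [← Matrix.map_mul, h1, Matrix.map_one _ (map_zero C) (map_one C)]
    simp only [RingHom.mapMatrix_apply]
    rw [mul_sub, sub_mul]
    congr 1
    · rw [((Matrix.scalar_commute (X : ℝ[X]) (fun r' => Commute.all _ _)
        (U.map C)).symm : U.map (C : ℝ →+* ℝ[X]) * Matrix.scalar n X = _), mul_assoc, hUV,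
        Matrix.mul_one]
    · rw [← Matrix.map_mul, ← Matrix.map_mul]
  rw [Matrix.charpoly, hm, det_mul, det_mul, Matrix.charpoly]
  have : (U.map (C : ℝ →+* ℝ[X])).det * ((star U).map C).det = 1 := by
    rw [← det_mul, ← Matrix.map_mul, h1, Matrix.map_one _ (map_zero C) (map_one C), det_one]
  calc (U.map (C : ℝ →+* ℝ[X])).det * (charmatrix M).det * ((star U).map C).det
      = (charmatrix M).det * ((U.map (C : ℝ →+* ℝ[X])).det * ((star U).map C).det) := by ring
    _ = (charmatrix M).det := by rw [this, mul_one]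

private lemma charpoly_diagonal_real (d : n → ℝ) :
    (Matrix.diagonal d).charpoly = ∏ i, (X - C (d i)) := by
  have : charmatrix (Matrix.diagonal d) = Matrix.diagonal fun i => X - C (d i) := by
    ext i j
    by_cases h : i = j
    · subst h; simp [charmatrix_apply_eq]
    · rw [charmatrix_apply_ne _ _ _ h, Matrix.diagonal_apply_ne _ h,
        Matrix.diagonal_apply_ne _ h, map_zero, neg_zero]
  rw [Matrix.charpoly, this, det_diagonal]

private lemma conj_pow_aux (U D : Matrix n n ℝ) (h1 : U * star U = 1)
    (h2 : star U * U = 1) (k : ℕ) :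
    (U * D * star U) ^ k = U * D ^ k * star U := by
  induction k with
  | zero => simp [h1]
  | succ k ih =>
    rw [pow_succ, ih, pow_succ]
    calc U * D ^ k * star U * (U * D * star U)
        = U * D ^ k * (star U * U) * D * star U := by noncomm_ring
      _ = U * (D ^ k * D) * star U := by rw [h2]; noncomm_ring

private lemma herm_charpoly (A : Matrix n n ℝ) (hA : A.IsHermitian) :
    A.charpoly = ∏ i, (X - C (hA.eigenvalues i)) := by
  have hU1 : (hA.eigenvectorUnitary : Matrix n n ℝ)
      * star (hA.eigenvectorUnitary : Matrix n n ℝ) = 1 :=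
    mem_unitaryGroup_iff.mp (hA.eigenvectorUnitary).2
  have hμ : (RCLike.ofReal ∘ hA.eigenvalues : n → ℝ) = hA.eigenvalues := by
    rw [RCLike.ofReal_real_eq_id]; rfl
  conv_lhs => rw [hA.spectral_theorem, Unitary.conjStarAlgAut_apply, hμ]
  rw [charpoly_conj_aux _ _ hU1, charpoly_diagonal_real]

private lemma herm_trace_pow (A : Matrix n n ℝ) (hA : A.IsHermitian) (k : ℕ) :
    (A ^ k).trace = ∑ i, hA.eigenvalues i ^ k := by
  have hU1 : (hA.eigenvectorUnitary : Matrix n n ℝ)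
      * star (hA.eigenvectorUnitary : Matrix n n ℝ) = 1 :=
    mem_unitaryGroup_iff.mp (hA.eigenvectorUnitary).2
  have hU2 : star (hA.eigenvectorUnitary : Matrix n n ℝ)
      * (hA.eigenvectorUnitary : Matrix n n ℝ) = 1 :=
    mem_unitaryGroup_iff'.mp (hA.eigenvectorUnitary).2
  have hμ : (RCLike.ofReal ∘ hA.eigenvalues : n → ℝ) = hA.eigenvalues := by
    rw [RCLike.ofReal_real_eq_id]; rfl
  conv_lhs => rw [hA.spectral_theorem, Unitary.conjStarAlgAut_apply, hμ, conj_pow_aux _ _ hU1 hU2]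
  rw [trace_mul_cycle, hU2, one_mul, diagonal_pow, trace_diagonal]
  rfl

variable {V : Type*} [Fintype V] [DecidableEq V]

set_option maxHeartbeats 1000000 in
private lemma triangle_card_aux (G : SimpleGraph V) [DecidableRel G.Adj] :
    (univ.filter fun p : V × V × V =>
        G.Adj p.1 p.2.1 ∧ G.Adj p.2.1 p.2.2 ∧ G.Adj p.2.2 p.1).card
      = 6 * (G.cliqueFinset 3).card := by
  classical
  rw [Finset.card_eq_sum_card_fiberwise
    (f := fun p : V × V × V => ({p.1, p.2.1, p.2.2} : Finset V)) (t := G.cliqueFinset 3)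
    (by
      rintro ⟨x, y, z⟩ hp
      simp only [mem_coe, mem_filter] at hp
      obtain ⟨-, hxy, hyz, hzx⟩ := hp
      rw [mem_coe, SimpleGraph.mem_cliqueFinset_iff, SimpleGraph.is3Clique_triple_iff]
      exact ⟨hxy, hzx.symm, hyz⟩)]
  rw [Finset.sum_congr rfl (fun s hs => ?_), Finset.sum_const, smul_eq_mul, mul_comm]
  rw [SimpleGraph.mem_cliqueFinset_iff, SimpleGraph.is3Clique_iff] at hs
  obtain ⟨a, b, c, hab, hac, hbc, rfl⟩ := hs
  have hba := hab.symm; have hca := hac.symm; have hcb := hbc.symm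
  have hab' : a ≠ b := hab.ne
  have hac' : a ≠ c := hac.ne
  have hbc' : b ≠ c := hbc.ne
  have hba' : b ≠ a := hab.ne'
  have hca' : c ≠ a := hac.ne'
  have hcb' : c ≠ b := hbc.ne'
  have key : ((univ.filter fun p : V × V × V =>
        G.Adj p.1 p.2.1 ∧ G.Adj p.2.1 p.2.2 ∧ G.Adj p.2.2 p.1).filter
        fun p => ({p.1, p.2.1, p.2.2} : Finset V) = {a, b, c})
      = ({(a, b, c), (a, c, b), (b, a, c), (b, c, a), (c, a, b), (c, b, a)} :
          Finset (V × V × V)) := by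
    ext ⟨x, y, z⟩
    simp only [mem_filter, mem_univ, true_and, mem_insert, mem_singleton, Prod.mk.injEq]
    constructor
    · rintro ⟨⟨hxy, hyz, hzx⟩, hset⟩
      have hxy' : x ≠ y := hxy.ne
      have hyz' : y ≠ z := hyz.ne
      have hzx' : z ≠ x := hzx.ne
      have hx : x = a ∨ x = b ∨ x = c := by
        have : x ∈ ({a, b, c} : Finset V) := hset ▸ (by simp)
        simpa using this
      have hy : y = a ∨ y = b ∨ y = c := by
        have : y ∈ ({a, b, c} : Finset V) := hset ▸ (by simp)
        simpa using this
      have hz : z = a ∨ z = b ∨ z = c := by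
        have : z ∈ ({a, b, c} : Finset V) := hset ▸ (by simp)
        simpa using this
      rcases hx with rfl | rfl | rfl <;> rcases hy with rfl | rfl | rfl <;>
        rcases hz with rfl | rfl | rfl <;> simp_all
    · rintro (⟨rfl, rfl, rfl⟩ | ⟨rfl, rfl, rfl⟩ | ⟨rfl, rfl, rfl⟩ | ⟨rfl, rfl, rfl⟩ |
        ⟨rfl, rfl, rfl⟩ | ⟨rfl, rfl, rfl⟩) <;>
      refine ⟨⟨by assumption, by assumption, by assumption⟩, ?_⟩ <;>
      · ext v; simp; try tauto
  rw [key]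
  rw [Finset.card_insert_of_notMem
      (by simp [Prod.ext_iff, hab', hac', hbc', hba', hca', hcb']),
    Finset.card_insert_of_notMem
      (by simp [Prod.ext_iff, hab', hac', hbc', hba', hca', hcb']),
    Finset.card_insert_of_notMem
      (by simp [Prod.ext_iff, hab', hac', hbc', hba', hca', hcb']),
    Finset.card_insert_of_notMem
      (by simp [Prod.ext_iff, hab', hac', hbc', hba', hca', hcb']),
    Finset.card_insert_of_notMem
      (by simp [Prod.ext_iff, hab', hac', hbc', hba', hca', hcb']),
    Finset.card_singleton]

private lemma trace_adj_cube (G : SimpleGraph V) [DecidableRel G.Adj] :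
    (G.adjMatrix ℝ * G.adjMatrix ℝ * G.adjMatrix ℝ).trace
      = 6 * ((G.cliqueFinset 3).card : ℝ) := by
  classical
  have h1 : (G.adjMatrix ℝ * G.adjMatrix ℝ * G.adjMatrix ℝ).trace
      = ∑ v, ∑ w, ∑ u, (if G.Adj v w ∧ G.Adj w u ∧ G.Adj u v then (1 : ℝ) else 0) := by
    simp only [Matrix.trace, Matrix.diag, Matrix.mul_apply, SimpleGraph.adjMatrix_apply,
      Finset.sum_mul]
    refine Finset.sum_congr rfl fun v _ => ?_
    rw [Finset.sum_comm]
    refine Finset.sum_congr rfl fun w _ => Finset.sum_congr rfl fun u _ => ?_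
    by_cases h1 : G.Adj v w <;> by_cases h2 : G.Adj w u <;> by_cases h3 : G.Adj u v <;>
      simp [h1, h2, h3]
  have h2 : (∑ v, ∑ w, ∑ u, (if G.Adj v w ∧ G.Adj w u ∧ G.Adj u v then (1 : ℝ) else 0))
      = ((univ.filter fun p : V × V × V =>
          G.Adj p.1 p.2.1 ∧ G.Adj p.2.1 p.2.2 ∧ G.Adj p.2.2 p.1).card : ℝ) := by
    rw [← Finset.sum_boole]
    conv_rhs => rw [Fintype.sum_prod_type]
    refine Finset.sum_congr rfl fun v _ => ?_
    conv_rhs => rw [Fintype.sum_prod_type]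
  rw [h1, h2, triangle_card_aux]
  push_cast
  ring

end Aux

set_option maxHeartbeats 1000000 in
/-- For a finite simple graph `G` with `n ≥ 3` vertices, `m` edges, degree
sequence `(d_v)` and `t_G` triangles, the coefficients `q_j` of `x^(n-j)` in the
characteristic polynomial of the signless Laplacian `Q(G) = D(G) + A(G)` satisfy
`q_0 = 1`, `q_1 = −2m`, `q_2 = 2m² − m − (1/2)Σ d²` and
`q_3 = −(1/3)(6t_G − 6m² + 4m³ + 3(1−m)Σ d² + Σ d³)`. -/
theorem signless_laplacian_charpoly_first_four_coeffs {V : Type*} [Fintype V] [DecidableEq V]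
    (G : SimpleGraph V) [DecidableRel G.Adj]
    (hn : 3 ≤ Fintype.card V) :
    (Matrix.charpoly
        (Matrix.diagonal (fun v => (G.degree v : ℝ)) + G.adjMatrix ℝ)).coeff
        (Fintype.card V - 0) = 1 ∧
    (Matrix.charpoly
        (Matrix.diagonal (fun v => (G.degree v : ℝ)) + G.adjMatrix ℝ)).coeff
        (Fintype.card V - 1) = -2 * (G.edgeFinset.card : ℝ) ∧
    (Matrix.charpoly
        (Matrix.diagonal (fun v => (G.degree v : ℝ)) + G.adjMatrix ℝ)).coeff
        (Fintype.card V - 2)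
      = 2 * (G.edgeFinset.card : ℝ) ^ 2 - (G.edgeFinset.card : ℝ)
          - (1 / 2) * ∑ v, (G.degree v : ℝ) ^ 2 ∧
    (Matrix.charpoly
        (Matrix.diagonal (fun v => (G.degree v : ℝ)) + G.adjMatrix ℝ)).coeff
        (Fintype.card V - 3)
      = -(1 / 3) * (6 * ((G.cliqueFinset 3).card : ℝ)
          - 6 * (G.edgeFinset.card : ℝ) ^ 2 + 4 * (G.edgeFinset.card : ℝ) ^ 3
          + 3 * (1 - (G.edgeFinset.card : ℝ)) * ∑ v, (G.degree v : ℝ) ^ 2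
          + ∑ v, (G.degree v : ℝ) ^ 3) := by

  classical
  set d : V → ℝ := fun v => (G.degree v : ℝ) with hd
  set A := G.adjMatrix ℝ with hA
  set D := Matrix.diagonal d with hD
  set Q := D + A with hQdef
  set E : ℝ := (G.edgeFinset.card : ℝ) with hE
  set T : ℝ := ((G.cliqueFinset 3).card : ℝ) with hT
  have hQ : Q.IsHermitian := by
    refine Matrix.IsHermitian.add (Matrix.isHermitian_diagonal d) ?_
    rw [Matrix.IsHermitian, Matrix.conjTranspose_eq_transpose_of_trivial, hA,
      SimpleGraph.transpose_adjMatrix]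
  set μ := hQ.eigenvalues with hμ
  -- basic degree sum
  have hS1 : (∑ v, d v) = 2 * E := by
    have h := SimpleGraph.sum_degrees_eq_twice_card_edges G
    rw [hE, hd]
    rw [← Nat.cast_sum, h]
    push_cast
    ring
  -- traces
  have htrA : Matrix.trace A = 0 := by simp [hA]
  have htrDA : Matrix.trace (D * A) = 0 := by
    have hz : ∀ v, (D * A) v v = 0 := fun v => by
      rw [hD, Matrix.diagonal_mul, hA, SimpleGraph.adjMatrix_apply]
      simp
    simp only [Matrix.trace, Matrix.diag]
    exact Finset.sum_eq_zero fun v _ => hz v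
  have htrAD : Matrix.trace (A * D) = 0 := by
    have hz : ∀ v, (A * D) v v = 0 := fun v => by
      rw [hD, Matrix.mul_diagonal, hA, SimpleGraph.adjMatrix_apply]
      simp
    simp only [Matrix.trace, Matrix.diag]
    exact Finset.sum_eq_zero fun v _ => hz v
  have hAA : ∀ v, (A * A) v v = d v := fun v => by
    rw [hA, SimpleGraph.adjMatrix_mul_self_apply_self, hd]
  have htrAA : Matrix.trace (A * A) = ∑ v, d v := by
    simp only [Matrix.trace, Matrix.diag]
    exact Finset.sum_congr rfl fun v _ => hAA v
  have htrDD : Matrix.trace (D * D) = ∑ v, d v ^ 2 := by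
    rw [hD, Matrix.diagonal_mul_diagonal, Matrix.trace_diagonal]
    exact Finset.sum_congr rfl fun v _ => (sq (d v)).symm
  have htrDDD : Matrix.trace (D * D * D) = ∑ v, d v ^ 3 := by
    rw [hD, Matrix.diagonal_mul_diagonal, Matrix.diagonal_mul_diagonal, Matrix.trace_diagonal]
    refine Finset.sum_congr rfl fun v _ => by ring
  have htrDDA : Matrix.trace (D * D * A) = 0 := by
    have hz : ∀ v, (D * D * A) v v = 0 := fun v => by
      rw [hD, Matrix.diagonal_mul_diagonal, Matrix.diagonal_mul, hA,
        SimpleGraph.adjMatrix_apply]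
      simp
    simp only [Matrix.trace, Matrix.diag]
    exact Finset.sum_eq_zero fun v _ => hz v
  have htrDAA : Matrix.trace (D * A * A) = ∑ v, d v ^ 2 := by
    rw [mul_assoc]
    simp only [Matrix.trace, Matrix.diag, hD, Matrix.diagonal_mul]
    refine Finset.sum_congr rfl fun v _ => by rw [hAA v]; ring
  have htrAAA : Matrix.trace (A * A * A) = 6 * T := by
    rw [hA, trace_adj_cube, hT]
  -- power traces of Q
  have hp1 : (∑ i, μ i) = 2 * E := by
    have := herm_trace_pow Q hQ 1
    rw [pow_one] at this
    simp only [pow_one] at this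
    rw [← this, hQdef, Matrix.trace_add, htrA, add_zero, hD, Matrix.trace_diagonal, hS1]
  have hp2 : (∑ i, μ i ^ 2) = (∑ v, d v ^ 2) + 2 * E := by
    have h := herm_trace_pow Q hQ 2
    rw [← h, hQdef, pow_two, add_mul, mul_add, mul_add, Matrix.trace_add, Matrix.trace_add,
      Matrix.trace_add, htrDD, htrDA, htrAD, htrAA, hS1]
    ring
  have hp3 : (∑ i, μ i ^ 3) = (∑ v, d v ^ 3) + 3 * (∑ v, d v ^ 2) + 6 * T := by
    have h := herm_trace_pow Q hQ 3
    have hexp : Q ^ 3 = D * D * D + D * D * A + D * A * D + D * A * A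
        + A * D * D + A * D * A + A * A * D + A * A * A := by
      rw [hQdef, pow_succ, pow_two]
      noncomm_ring
    have htrDAD : Matrix.trace (D * A * D) = 0 := by
      rw [Matrix.trace_mul_cycle]; exact htrDDA
    have htrADD : Matrix.trace (A * D * D) = 0 := by
      rw [Matrix.trace_mul_cycle]; exact htrDAD
    have htrAAD : Matrix.trace (A * A * D) = ∑ v, d v ^ 2 := by
      rw [Matrix.trace_mul_cycle]; exact htrDAA
    have htrADA : Matrix.trace (A * D * A) = ∑ v, d v ^ 2 := by
      rw [Matrix.trace_mul_cycle]; exact htrAAD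
    rw [← h, hexp]
    simp only [Matrix.trace_add]
    rw [htrDDD, htrDDA, htrDAD, htrDAA, htrADD, htrADA, htrAAD, htrAAA]
    ring
  -- charpoly coefficients via eigenvalue multiset
  set m : Multiset ℝ := Finset.univ.val.map μ with hm
  have hcardm : Multiset.card m = Fintype.card V := by
    rw [hm, Multiset.card_map]; rfl
  have hsum1 : m.sum = ∑ i, μ i := by rw [hm]; rfl
  have hsum2 : (m.map (· ^ 2)).sum = ∑ i, μ i ^ 2 := by
    rw [hm, Multiset.map_map]; rfl
  have hsum3 : (m.map (· ^ 3)).sum = ∑ i, μ i ^ 3 := by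
    rw [hm, Multiset.map_map]; rfl
  have hcp : Q.charpoly = (m.map fun t => X - C t).prod := by
    rw [herm_charpoly Q hQ, hm, Multiset.map_map, Finset.prod]
    rfl
  obtain ⟨h0, h1, h2, h3⟩ := coeff_prod_X_sub_C_aux m
  rw [← hcp] at h0 h1 h2 h3
  rw [hcardm] at h0 h1 h2 h3
  have hn1 : 1 ≤ Fintype.card V := by omega
  have hn2 : 2 ≤ Fintype.card V := by omega
  refine ⟨?_, ?_, ?_, ?_⟩
  · simpa using h0
  · rw [h1 hn1, hsum1, hp1]; ring
  · rw [h2 hn2, hsum1, hsum2, hp1, hp2]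
    ring
  · rw [h3 hn, hsum1, hsum2, hsum3, hp1, hp2, hp3]
    ring
end
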